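/- Representation theorem for equivariant maps: Let n ≥ m and let F : ℝ^{n^ℓ × a} → ℝ^{n^m × b} be a continuous S_n-equivariant map. Then there exist continuous maps F_T : ℝ^{n^ℓ × a} → ℝ^b, indexed by basis tableaux T of {1,…,m} of depth D (1 ≤ D ≤ m), such that F(x) = ∑_{D=1}^{m} ∑_{T ∈ T_{m,D}} (1/|H_D|) ∑_{g ∈ H_D} g⁻¹ · (F_T(g · x) ⊗ e_T), where e_T ∈ ℝ^{n^m} is the basis tableau vector assigning value d to the positions in the d-th row of T, and H_D = {σ_D ⋯ σ_1 : σ_i ∈ C_{n-D+i}} with C_{n-i} the cyclic group of order n-i on {i+1,…,n}. -/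

import Mathlib

/-!
Every index tuple `u : Fin m → Fin n` equals `g⁻¹ ∘ u_T` for exactly one depth `D`, basis
tableau `T` of depth `D` and `g ∈ H_D`. The rows of `T` have to be the level sets of `u`, that
is, the kernel partition of `u` in the order imposed by the tableau conditions; this pins down
`D` and `T`. Then `g` has to send the value of `u` on row `d` to `d`, and exactly one element of
`H_D` does so, because the `d`-th factor `C_{n-d}` fixes `0, …, d-1` and acts simply transitively
on `{d, …, n-1}`.

With `F_T(x) := |H_D| • F(x)_{u_T, ·}`, equivariance makes the `g`-summand at the index `(u, β)`
equal to `|H_D| F(x)_{u, β}` when `g ∘ u = u_T` and `0` otherwise, so the right-hand side counts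
every entry of `F(x)` exactly once.
-/

/-- The equivalence between `Fin (n - i)` and the elements of `Fin n` that are `≥ i`. -/
def shiftEquiv (n i : ℕ) : Fin (n - i) ≃ {j : Fin n // i ≤ (j : ℕ)} where
  toFun k := ⟨⟨i + k.val, by omega⟩, by simp⟩
  invFun j := ⟨(j : Fin n).val - i, by omega⟩
  left_inv k := by ext; simp
  right_inv j := by
    apply Subtype.ext
    apply Fin.ext
    have := j.2
    simp
    omega

/-- The cyclic permutation of order `n - i` on the elements of `Fin n` that are
`≥ i`, fixing the others.  Its powers form the cyclic group `C_{n-i}`. -/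
def cyc (n i : ℕ) : Equiv.Perm (Fin n) :=
  (finRotate (n - i)).extendDomain (shiftEquiv n i)

/-- `H_D = {σ_D ⋯ σ_1 : σ_i ∈ C_{n-D+i}}`, the set of products of one element
of each cyclic group `C_n, C_{n-1}, …, C_{n-D+1}` (the `C_n`-factor applied
first). -/
def HD (n D : ℕ) : Set (Equiv.Perm (Fin n)) :=
  {g | ∃ σ : Fin D → Equiv.Perm (Fin n),
    (∀ d : Fin D, σ d ∈ Subgroup.zpowers (cyc n d.val)) ∧
      g = (List.ofFn σ).reverse.prod}

/-- `H_D` as a finset. -/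
noncomputable def HDfin (n D : ℕ) : Finset (Equiv.Perm (Fin n)) :=
  (Set.toFinite (HD n D)).toFinset

/-- A basis tableau of depth `D` for `m` (rows encoded as `Finset`s, each row
read in increasing order): rows are nonempty, partition `{1,…,m}`, have weakly
decreasing lengths, and consecutive rows of equal length have increasing first
(minimal) entries. -/
def IsBasisTableau {m D : ℕ} (rows : Fin D → Finset (Fin m)) : Prop :=
  (∀ d, (rows d).Nonempty) ∧
  (∀ ℓ : Fin m, ∃! d, ℓ ∈ rows d) ∧
  (∀ d d' : Fin D, d ≤ d' → (rows d').card ≤ (rows d).card) ∧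
  (∀ (d : Fin D) (h : d.val + 1 < D),
    (rows d).card = (rows ⟨d.val + 1, h⟩).card →
      (rows d).min < (rows ⟨d.val + 1, h⟩).min)

/-- The finset of basis tableaux of depth `D` for `m`. -/
noncomputable def TabFin (m D : ℕ) : Finset (Fin D → Finset (Fin m)) :=
  (Set.toFinite {rows | IsBasisTableau rows}).toFinset

/-- The index tuple `u_T ∈ [n]^m` of a basis tableau `T`: `u_ℓ = d` when `ℓ`
lies in row `d` of `T` (for an actual basis tableau with depth `D ≤ n`, the
`% n` is the identity). -/
noncomputable def uT (n : ℕ) {m D : ℕ} (hn : 0 < n) (rows : Fin D → Finset (Fin m)) :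
    Fin m → Fin n :=
  fun ℓ =>
    if h : ∃ d, ℓ ∈ rows d then ⟨(Classical.choose h).val % n, Nat.mod_lt _ hn⟩
    else ⟨0, hn⟩

/-- `v ⊗ e_u ∈ ℝ^{n^m × b}` for `v ∈ ℝ^b` and a basis vector index `u ∈ [n]^m`. -/
def vTensor {n m b : ℕ} (v : Fin b → ℝ) (u : Fin m → Fin n) :
    ((Fin m → Fin n) × Fin b) → ℝ :=
  fun q => (if q.1 = u then 1 else 0) * v q.2

/-- The action of `S_n` on `ℝ^{n^ℓ × a}` (as functions `((Fin ℓ → Fin n) × Fin a) → ℝ`),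
permuting each tensor index: `(g • X)_{i_1…i_ℓ, α} = X_{g⁻¹(i_1)…g⁻¹(i_ℓ), α}`. -/
def tensorAct {n l a : ℕ} (g : Equiv.Perm (Fin n))
    (x : ((Fin l → Fin n) × Fin a) → ℝ) : ((Fin l → Fin n) × Fin a) → ℝ :=
  fun p => x (fun k => g⁻¹ (p.1 k), p.2)

open Finset Equiv Subgroup

section FinRotate

open Fin.NatCast

lemma finRotate_pow_apply {N : ℕ} [NeZero N] (k : ℕ) (j : Fin N) :
    (finRotate N ^ k) j = j + (k : Fin N) := by
  induction k with
  | zero => simp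
  | succ k ih => rw [pow_succ', Perm.mul_apply, ih, finRotate_apply, Nat.cast_succ, add_assoc]

lemma exists_mem_zpowers_finRotate_apply_eq_zero {N : ℕ} [NeZero N] (j : Fin N) :
    ∃ e ∈ zpowers (finRotate N), e j = 0 :=
  ⟨finRotate N ^ (-j).val, npow_mem_zpowers _ _, by
    rw [finRotate_pow_apply, Fin.cast_val_eq_self, add_neg_cancel]⟩

lemma eq_of_mem_zpowers_finRotate_of_apply_eq {N : ℕ} [NeZero N] {e e' : Perm (Fin N)}
    (he : e ∈ zpowers (finRotate N)) (he' : e' ∈ zpowers (finRotate N))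
    {j : Fin N} (h : e j = e' j) : e = e' := by
  obtain ⟨k, rfl⟩ := mem_powers_iff_mem_zpowers.mpr he
  obtain ⟨k', rfl⟩ := mem_powers_iff_mem_zpowers.mpr he'
  dsimp only at h ⊢
  rw [finRotate_pow_apply, finRotate_pow_apply, add_left_cancel_iff] at h
  ext i
  rw [finRotate_pow_apply, finRotate_pow_apply, h]

end FinRotate

lemma mem_zpowers_cyc_iff {n d : ℕ} {σ : Perm (Fin n)} :
    σ ∈ zpowers (cyc n d) ↔
      ∃ e ∈ zpowers (finRotate (n - d)), e.extendDomain (shiftEquiv n d) = σ := by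
  rw [cyc, ← Perm.extendDomainHom_apply, ← MonoidHom.map_zpowers, Subgroup.mem_map]
  rfl

lemma apply_eq_self_of_mem_zpowers_cyc {n d : ℕ} {σ : Perm (Fin n)}
    (hσ : σ ∈ zpowers (cyc n d)) {j : Fin n} (hj : (j : ℕ) < d) : σ j = j := by
  obtain ⟨e, -, rfl⟩ := mem_zpowers_cyc_iff.mp hσ
  exact Perm.extendDomain_apply_not_subtype _ _ (by omega)

lemma exists_mem_zpowers_cyc_apply_eq {n d : ℕ} (hd : d < n) {j : Fin n} (hj : d ≤ (j : ℕ)) :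
    ∃ σ ∈ zpowers (cyc n d), σ j = ⟨d, hd⟩ := by
  have : NeZero (n - d) := ⟨by omega⟩
  obtain ⟨e, he, he0⟩ :=
    exists_mem_zpowers_finRotate_apply_eq_zero ((shiftEquiv n d).symm ⟨j, hj⟩)
  refine ⟨e.extendDomain (shiftEquiv n d), mem_zpowers_cyc_iff.mpr ⟨e, he, rfl⟩, ?_⟩
  rw [Perm.extendDomain_apply_subtype _ _ (b := j) hj, he0]
  rfl

lemma eq_of_mem_zpowers_cyc_of_apply_eq {n d : ℕ} {σ σ' : Perm (Fin n)}
    (hσ : σ ∈ zpowers (cyc n d)) (hσ' : σ' ∈ zpowers (cyc n d))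
    {j : Fin n} (hj : d ≤ (j : ℕ)) (h : σ j = σ' j) : σ = σ' := by
  have : NeZero (n - d) := ⟨by omega⟩
  obtain ⟨e, he, rfl⟩ := mem_zpowers_cyc_iff.mp hσ
  obtain ⟨e', he', rfl⟩ := mem_zpowers_cyc_iff.mp hσ'
  rw [Perm.extendDomain_apply_subtype _ _ (b := j) hj,
    Perm.extendDomain_apply_subtype _ _ (b := j) hj, Subtype.coe_inj,
    (shiftEquiv n d).apply_eq_iff_eq] at h
  rw [eq_of_mem_zpowers_finRotate_of_apply_eq he he' h]

lemma one_mem_HD (n D : ℕ) : (1 : Perm (Fin n)) ∈ HD n D :=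
  ⟨fun _ => 1, fun _ => one_mem _, by simp⟩

lemma eq_one_of_mem_HD_zero {n : ℕ} {g : Perm (Fin n)} (hg : g ∈ HD n 0) : g = 1 := by
  obtain ⟨σ, -, rfl⟩ := hg
  simp

lemma mem_HD_succ {n D : ℕ} {g : Perm (Fin n)} :
    g ∈ HD n (D + 1) ↔ ∃ σ ∈ zpowers (cyc n D), ∃ h ∈ HD n D, g = σ * h := by
  constructor
  · rintro ⟨σ, hσ, rfl⟩
    refine ⟨σ (Fin.last D), hσ (Fin.last D), (List.ofFn (σ ∘ Fin.castSucc)).reverse.prod,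
      ⟨σ ∘ Fin.castSucc, fun d => hσ d.castSucc, rfl⟩, ?_⟩
    rw [List.ofFn_succ', List.concat_eq_append, List.reverse_append]
    simp [Function.comp_def]
  · rintro ⟨σD, hσD, h, ⟨σ, hσ, rfl⟩, rfl⟩
    refine ⟨Fin.snoc σ σD, Fin.lastCases (by simpa using hσD) (by simpa using hσ), ?_⟩
    rw [List.ofFn_succ', List.concat_eq_append, List.reverse_append]
    simp

lemma exists_mem_HD_apply_eq {n D : ℕ} (hD : D ≤ n) {v : Fin D → Fin n}
    (hv : Function.Injective v) : ∃ g ∈ HD n D, ∀ d, g (v d) = d.castLE hD := by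
  induction D with
  | zero => exact ⟨1, one_mem_HD n 0, fun d => d.elim0⟩
  | succ D ih =>
    obtain ⟨h, hh, hhv⟩ := ih (by omega) (hv.comp (Fin.castSucc_injective D))
    have hlast : D ≤ (h (v (Fin.last D)) : ℕ) := by
      by_contra! hlt
      have : h (v (Fin.last D)) = h (v (Fin.castSucc ⟨_, hlt⟩)) := (hhv ⟨_, hlt⟩).symm
      exact (Fin.castSucc_lt_last _).ne' (hv (h.injective this))
    obtain ⟨σ, hσ, hσv⟩ := exists_mem_zpowers_cyc_apply_eq (by omega) hlast
    refine ⟨σ * h, mem_HD_succ.mpr ⟨σ, hσ, h, hh, rfl⟩, Fin.lastCases ?_ fun d => ?_⟩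
    · exact hσv
    · rw [Perm.mul_apply]
      exact (congrArg σ (hhv d)).trans (apply_eq_self_of_mem_zpowers_cyc hσ d.isLt)

lemma eq_of_mem_HD_of_apply_eq {n D : ℕ} (hD : D ≤ n) {v : Fin D → Fin n}
    {g g' : Perm (Fin n)} (hg : g ∈ HD n D) (hg' : g' ∈ HD n D)
    (hgv : ∀ d, g (v d) = d.castLE hD) (hg'v : ∀ d, g' (v d) = d.castLE hD) : g = g' := by
  induction D generalizing g g' with
  | zero => rw [eq_one_of_mem_HD_zero hg, eq_one_of_mem_HD_zero hg']
  | succ D ih =>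
    obtain ⟨σ, hσ, h, hh, rfl⟩ := mem_HD_succ.mp hg
    obtain ⟨σ', hσ', h', hh', rfl⟩ := mem_HD_succ.mp hg'
    have hrestrict : ∀ {τ k : Perm (Fin n)}, τ ∈ zpowers (cyc n D) →
        (∀ d, (τ * k) (v d) = d.castLE hD) →
          ∀ d : Fin D, k (v d.castSucc) = d.castLE (by omega) :=
      fun {τ _} hτ hτk d => τ.injective <| (hτk d.castSucc).trans
        (apply_eq_self_of_mem_zpowers_cyc hτ d.isLt).symm
    obtain rfl : h = h' := ih (by omega) hh hh' (hrestrict hσ hgv) (hrestrict hσ' hg'v)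
    have hlast : D ≤ (h (v (Fin.last D)) : ℕ) := by
      by_contra! hlt
      have := hgv (Fin.last D)
      rw [Perm.mul_apply, apply_eq_self_of_mem_zpowers_cyc hσ hlt] at this
      exact hlt.ne (congrArg Fin.val this)
    rw [eq_of_mem_zpowers_cyc_of_apply_eq hσ hσ' hlast ((hgv _).trans (hg'v _).symm)]

lemma Fin.strictMono_iff_lt_next {α : Type*} [Preorder α] {D : ℕ} {f : Fin D → α} :
    StrictMono f ↔ ∀ (d : Fin D) (h : d.val + 1 < D), f d < f ⟨d.val + 1, h⟩ := by
  cases D with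
  | zero => exact ⟨fun _ d => d.elim0, fun _ d => d.elim0⟩
  | succ D =>
    rw [Fin.strictMono_iff_lt_succ]
    exact ⟨fun hf d h => hf ⟨d, by omega⟩, fun hf i => hf i.castSucc (by simp)⟩

section Tableau

variable {m D : ℕ}

/-- Rows of a basis tableau are listed in increasing order of this key: longer rows first,
rows of equal length by increasing first entry. -/
def rowKey (S : Finset (Fin m)) : ℕᵒᵈ ×ₗ WithTop (Fin m) :=
  toLex (OrderDual.toDual #S, S.min)

lemma min_eq_of_rowKey_eq {S S' : Finset (Fin m)} (h : rowKey S = rowKey S') : S.min = S'.min :=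
  congrArg (fun k => (ofLex k).2) h

lemma eq_of_min_eq {rows : Fin D → Finset (Fin m)} (hne : ∀ d, (rows d).Nonempty)
    (hpart : ∀ ℓ, ∃! d, ℓ ∈ rows d) {d d' : Fin D} (h : (rows d).min = (rows d').min) :
    d = d' := by
  obtain ⟨ℓ, hℓ⟩ := Finset.min_of_nonempty (hne d)
  exact (hpart ℓ).unique (Finset.mem_of_min hℓ) (Finset.mem_of_min (h ▸ hℓ))

lemma isBasisTableau_iff {rows : Fin D → Finset (Fin m)} :
    IsBasisTableau rows ↔ (∀ d, (rows d).Nonempty) ∧ (∀ ℓ, ∃! d, ℓ ∈ rows d) ∧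
      StrictMono (rowKey ∘ rows) := by
  simp only [IsBasisTableau, Fin.strictMono_iff_lt_next, Function.comp_apply, rowKey,
    Prod.Lex.toLex_lt_toLex, OrderDual.toDual_lt_toDual, OrderDual.toDual_inj]
  refine and_congr_right fun _ => and_congr_right fun _ => ⟨?_, ?_⟩
  · rintro ⟨hcard, hmin⟩ d h
    obtain hlt | heq := (hcard d ⟨d + 1, h⟩ (Fin.le_def.mpr (Nat.le_succ _))).lt_or_eq
    · exact .inl hlt
    · exact .inr ⟨heq.symm, hmin d h heq.symm⟩
  · intro hkey
    have hmono : Monotone (rowKey ∘ rows) := (Fin.strictMono_iff_lt_next.mpr ?_).monotone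
    · refine ⟨fun d d' hdd' => Prod.Lex.monotone_fst _ _ (hmono hdd'), fun d h heq => ?_⟩
      exact ((hkey d h).resolve_left heq.not_gt).2
    · simpa only [Function.comp_apply, rowKey, Prod.Lex.toLex_lt_toLex,
        OrderDual.toDual_lt_toDual, OrderDual.toDual_inj] using hkey

lemma IsBasisTableau.injective {rows : Fin D → Finset (Fin m)} (h : IsBasisTableau rows) :
    Function.Injective rows :=
  (isBasisTableau_iff.mp h).2.2.injective.of_comp

lemma IsBasisTableau.eq_of_image_eq {rows rows' : Fin D → Finset (Fin m)}
    (h : IsBasisTableau rows) (h' : IsBasisTableau rows')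
    (himage : univ.image rows = univ.image rows') : rows = rows' := by
  obtain ⟨hne, hpart, hmono⟩ := isBasisTableau_iff.mp h
  have hrange : Set.range rows = Set.range rows' := by
    rw [← Set.image_univ, ← Set.image_univ, ← coe_univ, ← coe_image, ← coe_image, himage]
  have hkey : rowKey ∘ rows = rowKey ∘ rows' :=
    (hmono.range_inj (isBasisTableau_iff.mp h').2.2).mp
      (by rw [Set.range_comp, Set.range_comp, hrange])
  funext d
  obtain ⟨e, he⟩ : rows' d ∈ Set.range rows := hrange ▸ Set.mem_range_self d
  have hde : rowKey (rows d) = rowKey (rows e) := (congrFun hkey d).trans (he ▸ rfl)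
  rw [← he, eq_of_min_eq hne hpart (min_eq_of_rowKey_eq hde)]

lemma Finpartition.exists_isBasisTableau (P : Finpartition (univ : Finset (Fin m))) :
    ∃ rows : Fin #P.parts → Finset (Fin m),
      IsBasisTableau rows ∧ univ.image rows = P.parts := by
  classical
  have hinj : Set.InjOn rowKey (P.parts : Set (Finset (Fin m))) := fun S hS S' hS' h => by
    obtain ⟨ℓ, hℓ⟩ := Finset.min_of_nonempty (P.nonempty_of_mem_parts hS)
    exact P.eq_of_mem_parts hS hS' (mem_of_min hℓ)
      (mem_of_min (min_eq_of_rowKey_eq h ▸ hℓ))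
  set key := (P.parts.image rowKey).orderEmbOfFin (card_image_of_injOn hinj)
  have hkey_mem : ∀ d, ∃ S ∈ P.parts, rowKey S = key d :=
    fun d => mem_image.mp (orderEmbOfFin_mem _ _ d)
  choose rows hrows hkey using hkey_mem
  have hrows_inj : Function.Injective rows :=
    fun d d' h => key.injective (by rw [← hkey, ← hkey, h])
  have himage : univ.image rows = P.parts :=
    eq_of_subset_of_card_le (image_subset_iff.mpr fun d _ => hrows d)
      (by rw [card_image_of_injective _ hrows_inj, card_fin])
  refine ⟨rows, isBasisTableau_iff.mpr ⟨fun d => P.nonempty_of_mem_parts (hrows d),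
    fun ℓ => ?_, ?_⟩, himage⟩
  · obtain ⟨S, hS, hℓS⟩ := P.exists_mem (mem_univ ℓ)
    obtain ⟨d, -, rfl⟩ := mem_image.mp (himage ▸ hS)
    exact ⟨d, hℓS, fun d' hd' => hrows_inj (P.eq_of_mem_parts (hrows d') (hrows d) hd' hℓS)⟩
  · rw [show rowKey ∘ rows = key from funext hkey]
    exact key.strictMono

lemma image_eq_parts_iff {rows : Fin D → Finset (Fin m)} (hne : ∀ d, (rows d).Nonempty)
    (hpart : ∀ ℓ, ∃! d, ℓ ∈ rows d) (P : Finpartition (univ : Finset (Fin m))) :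
    univ.image rows = P.parts ↔ ∀ d, ∀ ℓ ∈ rows d, rows d = P.part ℓ := by
  classical
  constructor
  · intro himage d ℓ hℓ
    exact (P.part_eq_of_mem (himage ▸ mem_image_of_mem rows (mem_univ d)) hℓ).symm
  · intro hrows
    ext S
    rw [mem_image]
    constructor
    · rintro ⟨d, -, rfl⟩
      obtain ⟨ℓ, hℓ⟩ := hne d
      exact hrows d ℓ hℓ ▸ P.part_mem.mpr (mem_univ ℓ)
    · intro hS
      obtain ⟨ℓ, hℓ⟩ := P.nonempty_of_mem_parts hS
      obtain ⟨d, hd, -⟩ := hpart ℓ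
      exact ⟨d, mem_univ d, (hrows d ℓ hd).trans (P.part_eq_of_mem hS hℓ)⟩

end Tableau

instance Setoid.decidableRelKer {α β : Type*} [DecidableEq β] (f : α → β) :
    DecidableRel (Setoid.ker f) :=
  fun _ _ => decidable_of_iff _ Setoid.ker_def.symm

section Representatives

variable {n m D : ℕ} {rows : Fin D → Finset (Fin m)}

lemma uT_apply_of_mem (hn : 0 < n) (hD : D ≤ n) (hpart : ∀ ℓ, ∃! d, ℓ ∈ rows d)
    {ℓ : Fin m} {d : Fin D} (h : ℓ ∈ rows d) : uT n hn rows ℓ = d.castLE hD := by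
  have hex : ∃ d, ℓ ∈ rows d := ⟨d, h⟩
  rw [uT, dif_pos hex, Fin.ext_iff, Fin.val_castLE, Fin.val_mk,
    (hpart ℓ).unique (Classical.choose_spec hex) h]
  exact Nat.mod_eq_of_lt (d.isLt.trans_le hD)

lemma uT_eq_castLE_iff (hn : 0 < n) (hD : D ≤ n) (hpart : ∀ ℓ, ∃! d, ℓ ∈ rows d)
    {ℓ : Fin m} {d : Fin D} : uT n hn rows ℓ = d.castLE hD ↔ ℓ ∈ rows d := by
  obtain ⟨d', hd', -⟩ := hpart ℓ
  rw [uT_apply_of_mem hn hD hpart hd', (Fin.castLE_injective hD).eq_iff]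
  exact ⟨fun h => h ▸ hd', (hpart ℓ).unique hd'⟩

lemma image_eq_parts_ker_of_apply_eq_uT (hn : 0 < n) (hD : D ≤ n)
    (hne : ∀ d, (rows d).Nonempty) (hpart : ∀ ℓ, ∃! d, ℓ ∈ rows d) {u : Fin m → Fin n}
    {g : Perm (Fin n)} (hg : ∀ ℓ, g (u ℓ) = uT n hn rows ℓ) :
    univ.image rows = (Finpartition.ofSetoid (Setoid.ker u)).parts := by
  refine (image_eq_parts_iff hne hpart _).mpr fun d ℓ hℓ => ?_
  ext b
  rw [Finpartition.mem_part_ofSetoid_iff_rel, Setoid.ker_def, ← uT_eq_castLE_iff hn hD hpart,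
    ← hg, ← uT_apply_of_mem hn hD hpart hℓ, ← hg, g.apply_eq_iff_eq, eq_comm]

lemma exists_mem_HD_apply_eq_uT (hn : 0 < n) (hD : D ≤ n) (hne : ∀ d, (rows d).Nonempty)
    (hpart : ∀ ℓ, ∃! d, ℓ ∈ rows d) {u : Fin m → Fin n}
    (himage : univ.image rows = (Finpartition.ofSetoid (Setoid.ker u)).parts) :
    ∃ g ∈ HD n D, ∀ ℓ, g (u ℓ) = uT n hn rows ℓ := by
  have hrows := (image_eq_parts_iff hne hpart _).mp himage
  choose rep hrep using hne
  have hsame : ∀ {d ℓ}, ℓ ∈ rows d → u ℓ = u (rep d) := fun {d ℓ} hℓ => by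
    rw [hrows d (rep d) (hrep d), Finpartition.mem_part_ofSetoid_iff_rel, Setoid.ker_def] at hℓ
    exact hℓ.symm
  have hinj : Function.Injective fun d => u (rep d) := fun d d' h =>
    (hpart (rep d)).unique (hrep d) (by
      rw [hrows d' (rep d') (hrep d'), Finpartition.mem_part_ofSetoid_iff_rel, Setoid.ker_def]
      exact h.symm)
  obtain ⟨g, hg, hgv⟩ := exists_mem_HD_apply_eq hD hinj
  refine ⟨g, hg, fun ℓ => ?_⟩
  obtain ⟨d, hd, -⟩ := hpart ℓ
  rw [hsame hd, hgv, uT_apply_of_mem hn hD hpart hd]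

lemma eq_of_mem_HD_of_apply_eq_uT (hn : 0 < n) (hD : D ≤ n) (hne : ∀ d, (rows d).Nonempty)
    (hpart : ∀ ℓ, ∃! d, ℓ ∈ rows d) {u : Fin m → Fin n} {g g' : Perm (Fin n)}
    (hg : g ∈ HD n D) (hg' : g' ∈ HD n D) (hgu : ∀ ℓ, g (u ℓ) = uT n hn rows ℓ)
    (hg'u : ∀ ℓ, g' (u ℓ) = uT n hn rows ℓ) : g = g' := by
  choose rep hrep using hne
  have hrep_apply : ∀ {g : Perm (Fin n)}, (∀ ℓ, g (u ℓ) = uT n hn rows ℓ) →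
      ∀ d, g (u (rep d)) = d.castLE hD :=
    fun hgu d => (hgu _).trans (uT_apply_of_mem hn hD hpart (hrep d))
  exact eq_of_mem_HD_of_apply_eq hD hg hg' (hrep_apply hgu) (hrep_apply hg'u)

end Representatives

lemma mem_TabFin {m D : ℕ} {rows : Fin D → Finset (Fin m)} :
    rows ∈ TabFin m D ↔ IsBasisTableau rows :=
  Set.Finite.mem_toFinset _

lemma mem_HDfin {n D : ℕ} {g : Perm (Fin n)} : g ∈ HDfin n D ↔ g ∈ HD n D :=
  Set.Finite.mem_toFinset _

theorem sum_card_filter_apply_eq_uT {n m : ℕ} (hm : 1 ≤ m) (hmn : m ≤ n) (hn : 0 < n)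
    (u : Fin m → Fin n) :
    ∑ D ∈ Icc 1 m, ∑ rows ∈ TabFin m D,
      #{g ∈ HDfin n D | (fun ℓ => g (u ℓ)) = uT n hn rows} = 1 := by
  set P := Finpartition.ofSetoid (Setoid.ker u)
  obtain ⟨rows₀, htab₀, himage₀⟩ := P.exists_isBasisTableau
  have hD₀ : #P.parts ∈ Icc 1 m := mem_Icc.mpr
    ⟨card_pos.mpr (P.parts_nonempty (univ_nonempty_iff.mpr ⟨⟨0, hm⟩⟩).ne_empty),
      P.card_parts_le_card.trans_eq (card_fin m)⟩
  have hD₀n : #P.parts ≤ n := (mem_Icc.mp hD₀).2.trans hmn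
  obtain ⟨g₀, hg₀, hg₀u⟩ :=
    exists_mem_HD_apply_eq_uT hn hD₀n htab₀.1 htab₀.2.1 himage₀
  rw [sum_eq_single_of_mem _ hD₀, sum_eq_single_of_mem _ (mem_TabFin.mpr htab₀), card_eq_one]
  · refine ⟨g₀, eq_singleton_iff_unique_mem.mpr
      ⟨mem_filter.mpr ⟨mem_HDfin.mpr hg₀, funext hg₀u⟩, fun g hg => ?_⟩⟩
    obtain ⟨hg, hgu⟩ := mem_filter.mp hg
    exact eq_of_mem_HD_of_apply_eq_uT hn hD₀n htab₀.1 htab₀.2.1 (mem_HDfin.mp hg) hg₀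
      (congrFun hgu) hg₀u
  · intro rows hrows hne
    have htab := mem_TabFin.mp hrows
    refine card_eq_zero.mpr (filter_eq_empty_iff.mpr fun g _ hgu => hne ?_)
    exact htab.eq_of_image_eq htab₀ <| (image_eq_parts_ker_of_apply_eq_uT hn hD₀n htab.1
      htab.2.1 (congrFun hgu)).trans himage₀.symm
  · intro D hD hne
    refine sum_eq_zero fun rows hrows => card_eq_zero.mpr
      (filter_eq_empty_iff.mpr fun g _ hgu => hne ?_)
    have htab := mem_TabFin.mp hrows
    rw [← image_eq_parts_ker_of_apply_eq_uT hn ((mem_Icc.mp hD).2.trans hmn) htab.1 htab.2.1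
      (congrFun hgu), card_image_of_injective _ htab.injective, card_fin]

lemma tensorAct_inv_vTensor_apply {n l b : ℕ} (g : Perm (Fin n)) (c : ℝ)
    (y : ((Fin l → Fin n) × Fin b) → ℝ) (u : Fin l → Fin n)
    (p : (Fin l → Fin n) × Fin b) :
    tensorAct g⁻¹ (vTensor (fun β => c * tensorAct g y (u, β)) u) p =
      if (fun k => g (p.1 k)) = u then c * y p else 0 := by
  simp only [tensorAct, vTensor, inv_inv]
  split_ifs with h
  · simp [← h]
  · simp

lemma one_div_card_mul_sum_ite {α : Type*} {s : Finset α} (hs : s.Nonempty) (P : α → Prop)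
    [DecidablePred P] (a : ℝ) :
    1 / (#s : ℝ) * ∑ g ∈ s, (if P g then #s * a else 0) = #{g ∈ s | P g} * a := by
  have : (#s : ℝ) ≠ 0 := Nat.cast_ne_zero.mpr hs.card_pos.ne'
  rw [← sum_filter, sum_const, nsmul_eq_mul]
  field_simp

/-- **Representation theorem for equivariant maps (Theorem 1).**
Let `n ≥ m ≥ 1` and let `F : ℝ^{n^ℓ × a} → ℝ^{n^m × b}` be a continuous
`S_n`-equivariant map.  Then there exist continuous maps
`F_T : ℝ^{n^ℓ × a} → ℝ^b`, indexed by basis tableaux `T` of depth `D`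
(`1 ≤ D ≤ m`), such that
`F(x) = ∑_{D=1}^m ∑_{T ∈ T_{m,D}} (1/|H_D|) ∑_{g ∈ H_D} g⁻¹ • (F_T(g • x) ⊗ e_T)`;
in particular each `H_D` is a Reynolds design of `F_T ∘ ê_{T,b}`. -/
theorem equivariant_representation (n l m a b : ℕ) (hm : 1 ≤ m) (hmn : m ≤ n)
    (F : (((Fin l → Fin n) × Fin a) → ℝ) → ((Fin m → Fin n) × Fin b) → ℝ)
    (hcont : Continuous F)
    (hequiv : ∀ (g : Equiv.Perm (Fin n)) x, F (tensorAct g x) = tensorAct g (F x)) :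
    ∃ Fc : (D : ℕ) → (Fin D → Finset (Fin m)) →
        (((Fin l → Fin n) × Fin a) → ℝ) → Fin b → ℝ,
      (∀ D rows, Continuous (Fc D rows)) ∧
      ∀ x, F x =
        ∑ D ∈ Finset.Icc 1 m, ∑ rows ∈ TabFin m D,
          (1 / ((HDfin n D).card : ℝ)) •
            ∑ g ∈ HDfin n D,
              tensorAct g⁻¹
                (vTensor (Fc D rows (tensorAct g x))
                  (uT n (lt_of_lt_of_le hm hmn) rows)) := by
  have hn : 0 < n := lt_of_lt_of_le hm hmn
  refine ⟨fun D rows x β => #(HDfin n D) * F x (uT n hn rows, β), fun D rows => by fun_prop,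
    fun x => funext fun p => ?_⟩
  have hHD : ∀ D, (HDfin n D).Nonempty := fun D => ⟨1, mem_HDfin.mpr (one_mem_HD n D)⟩
  simp only [Finset.sum_apply, Pi.smul_apply, smul_eq_mul, hequiv, tensorAct_inv_vTensor_apply,
    one_div_card_mul_sum_ite (hHD _), ← sum_mul]
  simp only [← Nat.cast_sum, sum_card_filter_apply_eq_uT hm hmn hn p.1, Nat.cast_one, one_mul]
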